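/- arXiv:1907.01157 — 2 statements merged into one kernel-verified Lean document; each statement's English description precedes it below -/
import Mathlib

section
/- Both of the following hold: q𝓜⁻¹K − q⁻¹K𝓜⁻¹ = (q − q⁻¹)I and q𝓜⁻¹B − q⁻¹B𝓜⁻¹ = (q − q⁻¹)I. -/
/-!
Writing `P = 1 - a q ψ` and `Q = 1 - a⁻¹ q ψ`, which commute, one has `a Q - a⁻¹ P = (a - a⁻¹)`,
hence `𝓜 = Q⁻¹ K` and `𝓜⁻¹ = K⁻¹ Q`. Then `𝓜⁻¹ K = K⁻¹ Q K`, `K 𝓜⁻¹ = Q`, `𝓜⁻¹ B = K⁻¹ P K` and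
`B 𝓜⁻¹ = P`. Since conjugation by `K` scales `ψ` by `q⁻²`, both identities reduce to
`q (1 - c q⁻¹ ψ) - q⁻¹ (1 - c q ψ) = q - q⁻¹` for `c = a⁻¹` and `c = a`.
-/

open scoped Ring

section

variable {𝕂 A : Type*} [Field 𝕂] [Ring A] [Algebra 𝕂 A]

theorem inverse_mul_one_sub_smul_mul {K ψ : A} {c : 𝕂} (hK : IsUnit K) (hc : c ≠ 0)
    (h : K * ψ = c • (ψ * K)) (x : 𝕂) :
    K⁻¹ʳ * (1 - x • ψ) * K = 1 - (x / c) • ψ := by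
  have hconj : K⁻¹ʳ * ψ * K = c⁻¹ • ψ := by
    rw [eq_inv_smul_iff₀ hc, mul_assoc, ← mul_smul_comm, ← h, Ring.inverse_mul_cancel_left _ _ hK]
  rw [mul_sub, sub_mul, mul_one, Ring.inverse_mul_cancel _ hK, mul_smul_comm, smul_mul_assoc,
    hconj, smul_smul, div_eq_mul_inv]

theorem commute_one_sub_smul (ψ : A) (x y : 𝕂) : Commute (1 - x • ψ) (1 - y • ψ) :=
  (Commute.one_left _).sub_left
    ((Commute.one_right _).sub_right (((Commute.refl ψ).smul_left x).smul_right y))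

theorem smul_sub_smul_mul_inverse_mul {a : 𝕂} (ha : a - a⁻¹ ≠ 0) {ψ : A} (q : 𝕂)
    (hQ : IsUnit (1 - (a⁻¹ * q) • ψ)) (K : A) :
    (a - a⁻¹)⁻¹ • (a • K - a⁻¹ • ((1 - (a * q) • ψ) * (1 - (a⁻¹ * q) • ψ)⁻¹ʳ * K)) =
      (1 - (a⁻¹ * q) • ψ)⁻¹ʳ * K := by
  set P := 1 - (a * q) • ψ
  set Q := 1 - (a⁻¹ * q) • ψ
  have hPQ : a • Q - a⁻¹ • P = (a - a⁻¹) • 1 := by module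
  have hcomm : P * Q⁻¹ʳ = Q⁻¹ʳ * P := by
    rw [eq_comm, Ring.inverse_mul_eq_iff_eq_mul _ _ _ hQ, ← mul_assoc,
      (commute_one_sub_smul ψ _ _).eq, Ring.mul_inverse_cancel_right _ _ hQ]
  clear_value P Q
  rw [inv_smul_eq_iff₀ ha, hcomm]
  calc a • K - a⁻¹ • (Q⁻¹ʳ * P * K) = Q⁻¹ʳ * (a • Q - a⁻¹ • P) * K := by
        rw [mul_sub, sub_mul, mul_smul_comm, mul_smul_comm, smul_mul_assoc, smul_mul_assoc,
          Ring.inverse_mul_cancel _ hQ, one_mul]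
    _ = (a - a⁻¹) • (Q⁻¹ʳ * K) := by rw [hPQ, mul_smul_comm, mul_one, smul_mul_assoc]

theorem smul_one_sub_smul_sub_inv_smul_one_sub_smul {q : 𝕂} (hq : q ≠ 0) (ψ : A) (c : 𝕂) :
    q • (1 - (c * q / q ^ 2) • ψ) - q⁻¹ • (1 - (c * q) • ψ) = (q - q⁻¹) • 1 := by
  match_scalars
  · field_simp
  · field_simp
    ring

end

theorem stmt_3_general
    {𝕂 : Type*} [Field 𝕂] {V : Type*} [AddCommGroup V] [Module 𝕂 V]
    (d : ℕ) (hd : 1 ≤ d) (q a : 𝕂) (hq : q ≠ 0) (ha : a ≠ 0)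
    (ha2 : ∀ i : ℤ, 1 - (d : ℤ) ≤ i → i ≤ (d : ℤ) - 1 → a ^ 2 ≠ q ^ (2 * i))
    (K : Module.End 𝕂 V) (hK : IsUnit K)
    (ψ : Module.End 𝕂 V)
    (hKψ : K * ψ = q ^ 2 • (ψ * K))
    (hinv : ∀ x : 𝕂, IsUnit (1 - x • ψ))
    (B : Module.End 𝕂 V)
    (hB : B = (1 - (a * q) • ψ) * Ring.inverse (1 - (a⁻¹ * q) • ψ) * K)
    (M : Module.End 𝕂 V)
    (hM : M = (a - a⁻¹)⁻¹ • (a • K - a⁻¹ • B)) :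
    q • (Ring.inverse M * K) - q⁻¹ • (K * Ring.inverse M)
      = (q - q⁻¹) • (1 : Module.End 𝕂 V) ∧
    q • (Ring.inverse M * B) - q⁻¹ • (B * Ring.inverse M)
      = (q - q⁻¹) • (1 : Module.End 𝕂 V) := by
  have ha_sub_inv : a - a⁻¹ ≠ 0 := by
    have ha_sq : a ^ 2 ≠ 1 := by simpa using ha2 0 (by omega) (by omega)
    rw [sub_ne_zero]
    intro h
    apply ha_sq
    rw [sq]
    nth_rewrite 2 [h]
    exact mul_inv_cancel₀ ha
  set P := 1 - (a * q) • ψ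
  set Q := 1 - (a⁻¹ * q) • ψ
  have hQ : IsUnit Q := hinv _
  have hMinv : M⁻¹ʳ = K⁻¹ʳ * Q := by
    rw [hM, hB, smul_sub_smul_mul_inverse_mul ha_sub_inv q hQ,
      Ring.inverse_mul (.inl hQ.ringInverse), Ring.inverse_inverse hQ]
  have hconj := inverse_mul_one_sub_smul_mul hK (pow_ne_zero 2 hq) hKψ
  constructor
  · rw [hMinv, hconj, Ring.mul_inverse_cancel_left _ _ hK]
    exact smul_one_sub_smul_sub_inv_smul_one_sub_smul hq ψ a⁻¹
  · have hQPQ : Q * P * Q⁻¹ʳ = P := by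
      rw [(commute_one_sub_smul ψ _ _).eq, Ring.mul_inverse_cancel_right _ _ hQ]
    have hMB : M⁻¹ʳ * B = K⁻¹ʳ * P * K := by
      rw [hMinv, hB, mul_assoc, ← mul_assoc Q, ← mul_assoc Q, hQPQ, ← mul_assoc]
    have hBM : B * M⁻¹ʳ = P := by
      rw [hMinv, hB, mul_assoc, Ring.mul_inverse_cancel_left _ _ hK, mul_assoc,
        Ring.inverse_mul_cancel _ hQ, mul_one]
    rw [hMB, hBM, hconj]
    exact smul_one_sub_smul_sub_inv_smul_one_sub_smul hq ψ a

theorem stmt_3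
    {𝕂 : Type*} [Field 𝕂] {V : Type*} [AddCommGroup V] [Module 𝕂 V]
    [FiniteDimensional 𝕂 V]
    (d : ℕ) (hd : 1 ≤ d) (q a : 𝕂) (hq : q ≠ 0) (ha : a ≠ 0)
    (hq2 : ∀ i : ℕ, 1 ≤ i → i ≤ d → q ^ (2 * i) ≠ 1)
    (ha2 : ∀ i : ℤ, 1 - (d : ℤ) ≤ i → i ≤ (d : ℤ) - 1 → a ^ 2 ≠ q ^ (2 * i))
    (K : Module.End 𝕂 V) (hK : IsUnit K)
    (U : ℕ → Submodule 𝕂 V)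
    (hUne : ∀ i, i ≤ d → U i ≠ ⊥)
    (hUint : DirectSum.IsInternal (fun i : Fin (d + 1) => U i.1))
    (hKU : ∀ i, i ≤ d → ∀ v ∈ U i, K v = (q ^ ((d : ℤ) - 2 * (i : ℤ))) • v)
    (ψ : Module.End 𝕂 V)
    (hψ0 : ∀ v ∈ U 0, ψ v = 0)
    (hψU : ∀ i, 1 ≤ i → i ≤ d → ∀ v ∈ U i, ψ v ∈ U (i - 1))
    (hψnil : ψ ^ (d + 1) = 0)
    (hKψ : K * ψ = q ^ 2 • (ψ * K))
    (hinv : ∀ x : 𝕂, IsUnit (1 - x • ψ))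
    (B : Module.End 𝕂 V)
    (hB : B = (1 - (a * q) • ψ) * Ring.inverse (1 - (a⁻¹ * q) • ψ) * K)
    (M : Module.End 𝕂 V)
    (hM : M = (a - a⁻¹)⁻¹ • (a • K - a⁻¹ • B))
    (hMunit : IsUnit M):
    q • (Ring.inverse M * K) - q⁻¹ • (K * Ring.inverse M)
      = (q - q⁻¹) • (1 : Module.End 𝕂 V) ∧
    q • (Ring.inverse M * B) - q⁻¹ • (B * Ring.inverse M)
      = (q - q⁻¹) • (1 : Module.End 𝕂 V) :=
  stmt_3_general d hd q a hq ha ha2 K hK ψ hKψ hinv B hB M hM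
end

section
/- The map Δ := exp_q((a/(q − q⁻¹))ψ)·exp_{q⁻¹}(−(a⁻¹/(q − q⁻¹))ψ) is invertible with inverse Δ⁻¹ = exp_q((a⁻¹/(q − q⁻¹))ψ)·exp_{q⁻¹}(−(a/(q − q⁻¹))ψ); moreover, for 0 ≤ i ≤ d, ΔU_i ⊆ U_i^↓ and (Δ − I)U_i ⊆ U_0 + U_1 + ⋯ + U_{i−1}. -/
/-!
Write `e_q(x)` for the truncated `q`-exponential polynomial. With `s = a/(q - q⁻¹)` and
`t = a⁻¹/(q - q⁻¹)`, `Δ` is the value at the nilpotent `ψ` of `Δ_{s,t}(x) = e_q(s x) e_{q⁻¹}(-t x)`,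
so every identity can be checked modulo `x^(d+1)`. There `e_q` satisfies the `q`-difference
equation `e_q(x) ≡ (1 - (q² - 1) x) e_q(q² x)`, and `e_{q⁻¹}` the same equation at `q⁻¹`; together
they give `(1 - s (q² - 1) x) Δ_{s,t}(q² x) ≡ (1 - t (q² - 1) x) Δ_{s,t}(x)`.
For `s = t`, cancelling the unit `1 - s (q² - 1) x` makes `Δ_{s,s}` invariant under `x ↦ q² x`,
hence constant because no `q^(2n)` with `1 ≤ n ≤ d` equals `1`: `Δ_{s,s} ≡ 1`, and `Δ_{s,t} Δ_{t,s} = Δ_{s,s} Δ_{t,t} ≡ 1`.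
Since `K g(ψ) = g(q² ψ) K`, the relation for `s ≠ t` reads `B Δ = Δ K`, so `Δ` maps the
`q^(d-2i)`-eigenspace `U_i` of `K` into the `q^(d-2i)`-eigenspace of `B`, which is `U_i^↓`.
Finally `Δ - 1` is `ψ` times a polynomial in `ψ`, and `ψ` lowers the flag `U_0 + ⋯ + U_i`.
-/

noncomputable def qNum {𝕂 : Type*} [Field 𝕂] (q : 𝕂) (n : ℕ) : 𝕂 :=
  (q ^ n - q⁻¹ ^ n) / (q - q⁻¹)

noncomputable def qFact {𝕂 : Type*} [Field 𝕂] (q : 𝕂) (n : ℕ) : 𝕂 :=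
  ∏ j ∈ Finset.range n, qNum q (j + 1)

noncomputable def qExp {𝕂 : Type*} [Field 𝕂] {V : Type*} [AddCommGroup V] [Module 𝕂 V]
    (q : 𝕂) (N : ℕ) (T : Module.End 𝕂 V) : Module.End 𝕂 V :=
  ∑ n ∈ Finset.range N, (q ^ (n * (n - 1) / 2) / qFact q n) • T ^ n

noncomputable def qExpInv {𝕂 : Type*} [Field 𝕂] {V : Type*} [AddCommGroup V] [Module 𝕂 V]
    (q : 𝕂) (N : ℕ) (T : Module.End 𝕂 V) : Module.End 𝕂 V :=
  ∑ n ∈ Finset.range N, (q⁻¹ ^ (n * (n - 1) / 2) / qFact q n) • T ^ n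

open Polynomial

section QNumbers

variable {𝕂 : Type*} [Field 𝕂]

lemma qNum_inv (q : 𝕂) (n : ℕ) : qNum q⁻¹ n = qNum q n := by
  rw [qNum, qNum, inv_inv, ← neg_sub, ← neg_sub q, neg_div_neg_eq]

lemma qFact_inv (q : 𝕂) (n : ℕ) : qFact q⁻¹ n = qFact q n := by
  simp only [qFact, qNum_inv]

lemma qExpInv_eq_qExp_inv {V : Type*} [AddCommGroup V] [Module 𝕂 V] (q : 𝕂) (N : ℕ)
    (T : Module.End 𝕂 V) : qExpInv q N T = qExp q⁻¹ N T := by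
  simp only [qExpInv, qExp, qFact_inv]

lemma qNum_ne_zero {q : 𝕂} (hq : q ≠ 0) (hq1 : q ^ 2 ≠ 1) {n : ℕ} (hn : q ^ (2 * n) ≠ 1) :
    qNum q n ≠ 0 := by
  have hsub : q - q⁻¹ ≠ 0 := fun h =>
    hq1 (by rw [sq]; nth_rw 2 [sub_eq_zero.mp h]; exact mul_inv_cancel₀ hq)
  refine div_ne_zero (sub_ne_zero.mpr fun h => hn ?_) hsub
  rw [two_mul, pow_add]
  nth_rw 2 [h]
  rw [← mul_pow, mul_inv_cancel₀ hq, one_pow]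

noncomputable def qExpCoeff (q : 𝕂) (n : ℕ) : 𝕂 := q ^ (n * (n - 1) / 2) / qFact q n

lemma qExpCoeff_zero (q : 𝕂) : qExpCoeff q 0 = 1 := by simp [qExpCoeff, qFact]

lemma qExpCoeff_succ (q : 𝕂) (m : ℕ) :
    qExpCoeff q (m + 1) = qExpCoeff q m * (q ^ m / qNum q (m + 1)) := by
  rw [qExpCoeff, qExpCoeff, qFact, Finset.prod_range_succ, ← qFact, div_mul_div_comm, ← pow_add,
    Nat.triangle_succ]

lemma sub_one_mul_qExpCoeff_succ {q : 𝕂} (hq : q ≠ 0) {m : ℕ} (hm : qNum q (m + 1) ≠ 0) :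
    (q ^ (2 * (m + 1)) - 1) * qExpCoeff q (m + 1) = (q ^ 2 - 1) * q ^ (2 * m) * qExpCoeff q m := by
  have hnum : q ^ (m + 1) - q⁻¹ ^ (m + 1) ≠ 0 := fun h => hm (by rw [qNum, h, zero_div])
  have key : (q ^ (2 * (m + 1)) - 1) * (q ^ m / qNum q (m + 1)) = (q ^ 2 - 1) * q ^ (2 * m) := by
    rw [qNum, div_div_eq_mul_div, ← mul_div_assoc, div_eq_iff hnum, inv_pow]
    field_simp
    ring
  rw [qExpCoeff_succ]
  linear_combination qExpCoeff q m * key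

end QNumbers

section Dilation

variable {R : Type*} [CommRing R]

lemma coeff_comp_C_mul_X (p : R[X]) (s : R) (n : ℕ) :
    (p.comp (C s * X)).coeff n = s ^ n * p.coeff n := by
  induction p using Polynomial.induction_on' with
  | add p r hp hr => rw [add_comp, coeff_add, hp, hr, coeff_add, mul_add]
  | monomial m c =>
    rw [monomial_comp, mul_pow, ← C_pow, ← mul_assoc, ← C_mul, coeff_C_mul_X_pow, coeff_monomial]
    split_ifs <;> simp_all [mul_comm]

lemma comp_C_mul_X_comp_C_mul_X (p : R[X]) (s t : R) :
    (p.comp (C s * X)).comp (C t * X) = p.comp (C (s * t) * X) := by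
  rw [comp_assoc, mul_comp, C_comp, X_comp, ← mul_assoc, ← C_mul]

lemma X_pow_dvd_comp_C_mul_X {N : ℕ} {p : R[X]} (h : X ^ N ∣ p) (s : R) :
    X ^ N ∣ p.comp (C s * X) := by
  rw [X_pow_dvd_iff] at h ⊢
  intro n hn
  rw [coeff_comp_C_mul_X, h n hn, mul_zero]

lemma X_pow_dvd_of_dvd_one_sub_C_mul_X_mul {N : ℕ} {b : R} {p : R[X]}
    (h : X ^ N ∣ (1 - C b * X) * p) : X ^ N ∣ p :=
  (IsCoprime.pow_left ⟨C b, 1, by ring⟩ : IsCoprime (X ^ N) (1 - C b * X)).dvd_of_dvd_mul_left h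

lemma coeff_one_sub_C_mul_X_mul_succ (b : R) (p : R[X]) (m : ℕ) :
    ((1 - C b * X) * p).coeff (m + 1) = p.coeff (m + 1) - b * p.coeff m := by
  rw [sub_mul, one_mul, coeff_sub, mul_assoc, coeff_C_mul, coeff_X_mul]

lemma X_pow_dvd_comp_C_mul_X_sub {N : ℕ} {p : R[X]} {μ r : R}
    (h : X ^ N ∣ p - (1 - C μ * X) * p.comp (C r * X)) (s : R) :
    X ^ N ∣ p.comp (C s * X) - (1 - C (s * μ) * X) * (p.comp (C s * X)).comp (C r * X) := by
  have := X_pow_dvd_comp_C_mul_X h s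
  rw [sub_comp, mul_comp, sub_comp, one_comp, mul_comp, C_comp, X_comp,
    comp_C_mul_X_comp_C_mul_X] at this
  rw [comp_C_mul_X_comp_C_mul_X, mul_comm s r, C_mul]
  convert this using 3
  ring

variable [IsDomain R]

lemma X_pow_dvd_sub_C_of_comp_C_mul_X {N : ℕ} {s : R} (hs : ∀ n, 1 ≤ n → n < N → s ^ n ≠ 1)
    {p : R[X]} (h : X ^ N ∣ p.comp (C s * X) - p) : X ^ N ∣ p - C (p.coeff 0) := by
  rw [X_pow_dvd_iff] at h ⊢
  rintro (_ | n) hn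
  · simp
  · have hn' := h (n + 1) hn
    rw [coeff_sub, coeff_comp_C_mul_X, ← sub_one_mul, mul_eq_zero] at hn'
    rw [coeff_sub, coeff_C_succ, sub_zero]
    exact hn'.resolve_left (sub_ne_zero.mpr (hs (n + 1) (by omega) hn))

end Dilation

section QExpPoly

variable {𝕂 : Type*} [Field 𝕂]

noncomputable def qExpPoly (q : 𝕂) (N : ℕ) : 𝕂[X] :=
  ∑ n ∈ Finset.range N, C (qExpCoeff q n) * X ^ n

lemma coeff_qExpPoly (q : 𝕂) (N n : ℕ) :
    (qExpPoly q N).coeff n = if n < N then qExpCoeff q n else 0 := by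
  simp [qExpPoly, coeff_C_mul, coeff_X_pow]

lemma qExp_eq_aeval {V : Type*} [AddCommGroup V] [Module 𝕂 V] (q : 𝕂) (N : ℕ)
    (T : Module.End 𝕂 V) : qExp q N T = aeval T (qExpPoly q N) := by
  simp [qExp, qExpPoly, qExpCoeff, Algebra.smul_def]

lemma X_pow_dvd_qExpPoly_sub {q : 𝕂} (hq : q ≠ 0) {N : ℕ}
    (hqN : ∀ n, 1 ≤ n → n < N → q ^ (2 * n) ≠ 1) :
    X ^ N ∣ qExpPoly q N - (1 - C (q ^ 2 - 1) * X) * (qExpPoly q N).comp (C (q ^ 2) * X) := by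
  rw [X_pow_dvd_iff]
  rintro (_ | m) hm
  · simp only [coeff_sub, sub_mul, one_mul, mul_assoc, coeff_C_mul, coeff_X_mul_zero,
      coeff_comp_C_mul_X, coeff_qExpPoly, if_pos hm]
    ring
  · have hrec := sub_one_mul_qExpCoeff_succ hq
      (qNum_ne_zero hq (by simpa using hqN 1 le_rfl (by omega)) (hqN (m + 1) (by omega) hm))
    rw [coeff_sub, coeff_one_sub_C_mul_X_mul_succ, coeff_comp_C_mul_X, coeff_comp_C_mul_X,
      coeff_qExpPoly, coeff_qExpPoly, if_pos hm, if_pos (by omega), ← pow_mul, ← pow_mul]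
    linear_combination -hrec

noncomputable def qExpMulPoly (q : 𝕂) (N : ℕ) (s t : 𝕂) : 𝕂[X] :=
  (qExpPoly q N).comp (C s * X) * (qExpPoly q⁻¹ N).comp (C (-t) * X)

lemma aeval_qExpMulPoly {V : Type*} [AddCommGroup V] [Module 𝕂 V] (q : 𝕂) (N : ℕ) (s t : 𝕂)
    (ψ : Module.End 𝕂 V) :
    aeval ψ (qExpMulPoly q N s t) = qExp q N (s • ψ) * qExpInv q N (-(t • ψ)) := by
  rw [qExpMulPoly, map_mul, aeval_comp, aeval_comp, qExpInv_eq_qExp_inv, qExp_eq_aeval,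
    qExp_eq_aeval, map_mul, map_mul, aeval_C, aeval_C, aeval_X, ← Algebra.smul_def,
    ← Algebra.smul_def, neg_smul]

lemma qExpMulPoly_mul_swap (q : 𝕂) (N : ℕ) (s t : 𝕂) :
    qExpMulPoly q N s t * qExpMulPoly q N t s = qExpMulPoly q N s s * qExpMulPoly q N t t := by
  simp only [qExpMulPoly]
  ring

lemma coeff_zero_qExpMulPoly (q : 𝕂) {N : ℕ} (hN : 0 < N) (s t : 𝕂) :
    (qExpMulPoly q N s t).coeff 0 = 1 := by
  simp only [qExpMulPoly, mul_coeff_zero, coeff_comp_C_mul_X, coeff_qExpPoly, if_pos hN,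
    qExpCoeff_zero, pow_zero, mul_one]

lemma X_pow_dvd_qExpMulPoly_comp_sub {q : 𝕂} (hq : q ≠ 0) {N : ℕ}
    (hqN : ∀ n, 1 ≤ n → n < N → q ^ (2 * n) ≠ 1) (s t : 𝕂) :
    X ^ N ∣ (1 - C (s * (q ^ 2 - 1)) * X) * (qExpMulPoly q N s t).comp (C (q ^ 2) * X)
      - (1 - C (t * (q ^ 2 - 1)) * X) * qExpMulPoly q N s t := by
  have hE := X_pow_dvd_comp_C_mul_X_sub (X_pow_dvd_qExpPoly_sub hq hqN) s
  -- the equation of the second factor is that of `qExpPoly` at `q⁻¹`, rescaled by `-t q²`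
  have hF := X_pow_dvd_comp_C_mul_X_sub (X_pow_dvd_qExpPoly_sub (inv_ne_zero hq)
    fun n h₁ h₂ => by rw [inv_pow, Ne, inv_eq_one]; exact hqN n h₁ h₂) (-t * q ^ 2)
  rw [comp_C_mul_X_comp_C_mul_X, show -t * q ^ 2 * q⁻¹ ^ 2 = -t by field_simp,
    show -t * q ^ 2 * (q⁻¹ ^ 2 - 1) = t * (q ^ 2 - 1) by field_simp; ring,
    ← comp_C_mul_X_comp_C_mul_X] at hF
  rw [qExpMulPoly, mul_comp]
  convert dvd_sub (hF.mul_left ((qExpPoly q N).comp (C s * X)))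
    (hE.mul_right (((qExpPoly q⁻¹ N).comp (C (-t) * X)).comp (C (q ^ 2) * X))) using 1
  ring

lemma X_pow_dvd_qExpMulPoly_sub_one {q : 𝕂} (hq : q ≠ 0) {N : ℕ}
    (hqN : ∀ n, 1 ≤ n → n < N → q ^ (2 * n) ≠ 1) (s : 𝕂) : X ^ N ∣ qExpMulPoly q N s s - 1 := by
  rcases N.eq_zero_or_pos with rfl | hN
  · simp
  have h := X_pow_dvd_qExpMulPoly_comp_sub hq hqN s s
  rw [← mul_sub] at h
  have hfix := X_pow_dvd_sub_C_of_comp_C_mul_X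
    (fun n h₁ h₂ => by rw [← pow_mul]; exact hqN n h₁ h₂) (X_pow_dvd_of_dvd_one_sub_C_mul_X_mul h)
  rwa [coeff_zero_qExpMulPoly q hN, C_1] at hfix

lemma X_pow_dvd_qExpMulPoly_mul_swap_sub_one {q : 𝕂} (hq : q ≠ 0) {N : ℕ}
    (hqN : ∀ n, 1 ≤ n → n < N → q ^ (2 * n) ≠ 1) (s t : 𝕂) :
    X ^ N ∣ qExpMulPoly q N s t * qExpMulPoly q N t s - 1 := by
  rw [qExpMulPoly_mul_swap,
    show ∀ a b : 𝕂[X], a * b - 1 = (a - 1) * b + (b - 1) by intros; ring]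
  exact dvd_add ((X_pow_dvd_qExpMulPoly_sub_one hq hqN s).mul_right _)
    (X_pow_dvd_qExpMulPoly_sub_one hq hqN t)

end QExpPoly

section Operators

variable {R A : Type*} [CommRing R] [Ring A] [Algebra R A]

lemma SemiconjBy.aeval {k x y : A} (h : SemiconjBy k x y) (p : R[X]) :
    SemiconjBy k (aeval x p) (aeval y p) := by
  induction p using Polynomial.induction_on' with
  | add p r hp hr => simpa only [map_add] using hp.add_right hr
  | monomial n c =>
    simp only [aeval_monomial]
    exact SemiconjBy.mul_right (Algebra.commutes c k).symm (h.pow_right n)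

lemma aeval_eq_of_X_pow_dvd_sub {x : A} {N : ℕ} (hx : x ^ N = 0) {p r : R[X]}
    (h : X ^ N ∣ p - r) : aeval x p = aeval x r := by
  obtain ⟨u, hu⟩ := h
  rw [← sub_eq_zero, ← map_sub, hu, map_mul, map_pow, aeval_X, hx, zero_mul]

lemma aeval_one_sub_C_mul_X (x : A) (c : R) : aeval x (1 - C c * X) = 1 - c • x := by
  rw [map_sub, map_one, map_mul, aeval_C, aeval_X, Algebra.smul_def]

variable {𝕂 : Type*} [Field 𝕂] [Algebra 𝕂 A]

lemma aeval_qExpMulPoly_mul_swap {q : 𝕂} (hq : q ≠ 0) {N : ℕ}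
    (hqN : ∀ n, 1 ≤ n → n < N → q ^ (2 * n) ≠ 1) {x : A} (hx : x ^ N = 0) (s t : 𝕂) :
    aeval x (qExpMulPoly q N s t) * aeval x (qExpMulPoly q N t s) = 1 := by
  rw [← map_mul, aeval_eq_of_X_pow_dvd_sub hx (X_pow_dvd_qExpMulPoly_mul_swap_sub_one hq hqN s t),
    map_one]

lemma mul_inverse_mul_aeval_qExpMulPoly {q : 𝕂} (hq : q ≠ 0) {N : ℕ}
    (hqN : ∀ n, 1 ≤ n → n < N → q ^ (2 * n) ≠ 1) {x : A} (hx : x ^ N = 0) {k : A}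
    (hk : k * x = q ^ 2 • (x * k)) (s t : 𝕂)
    (hunit : IsUnit (1 - (t * (q ^ 2 - 1)) • x)) :
    (1 - (s * (q ^ 2 - 1)) • x) * Ring.inverse (1 - (t * (q ^ 2 - 1)) • x) * k
      * aeval x (qExpMulPoly q N s t) = aeval x (qExpMulPoly q N s t) * k := by
  set G := qExpMulPoly q N s t
  set Y := 1 - (s * (q ^ 2 - 1)) • x with hY
  set W := 1 - (t * (q ^ 2 - 1)) • x with hW
  have hkG : k * aeval x G = aeval x (G.comp (C (q ^ 2) * X)) * k := by
    rw [aeval_comp, map_mul, aeval_C, aeval_X, ← Algebra.smul_def]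
    exact SemiconjBy.aeval (by rw [SemiconjBy, hk, smul_mul_assoc]) G
  have htwist : Y * aeval x (G.comp (C (q ^ 2) * X)) = W * aeval x G := by
    rw [hY, hW, ← aeval_one_sub_C_mul_X, ← aeval_one_sub_C_mul_X, ← map_mul, ← map_mul]
    exact aeval_eq_of_X_pow_dvd_sub hx (X_pow_dvd_qExpMulPoly_comp_sub hq hqN s t)
  have hWY : Commute W Y := by
    rw [hY, hW, ← aeval_one_sub_C_mul_X, ← aeval_one_sub_C_mul_X]
    exact (Commute.all _ _).map _
  obtain ⟨u, hu⟩ := hunit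
  have hinvY : Commute (Ring.inverse W) Y := by
    rw [← hu, Ring.inverse_unit]
    exact (hu ▸ hWY).units_inv_left
  calc Y * Ring.inverse W * k * aeval x G
      = Ring.inverse W * (Y * aeval x (G.comp (C (q ^ 2) * X))) * k := by
        rw [mul_assoc _ k, hkG, ← hinvY.eq]; simp only [mul_assoc]
    _ = aeval x G * k := by
        rw [htwist, ← mul_assoc, ← hu, Ring.inverse_unit, Units.inv_mul, one_mul]

end Operators

section Submodules

variable {𝕂 V : Type*} [Field 𝕂] [AddCommGroup V] [Module 𝕂 V]

lemma DirectSum.IsInternal.mem_of_apply_eq_smul {ι : Type*} [DecidableEq ι]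
    {N : ι → Submodule 𝕂 V} (hN : DirectSum.IsInternal N) {f : Module.End 𝕂 V} {μ : ι → 𝕂}
    (hμ : Function.Injective μ) (hf : ∀ j, ∀ v ∈ N j, f v = μ j • v) {i : ι} {v : V}
    (hv : f v = μ i • v) : v ∈ N i := by
  have hle : ∀ j, N j ≤ f.eigenspace (μ j) := fun j w hw =>
    Module.End.mem_eigenspace_iff.mpr (hf j w hw)
  have hv' : v ∈ N i ⊔ ⨆ (j) (_ : j ≠ i), N j := by
    rw [← iSup_split_single, hN.submodule_iSup_eq_top]
    trivial
  obtain ⟨y, hy, z, hz, rfl⟩ := Submodule.mem_sup.mp hv'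
  have hzi : z ∈ f.eigenspace (μ i) := by
    simpa using Submodule.sub_mem _ (Module.End.mem_eigenspace_iff.mpr hv) (hle i hy)
  have hz' : z ∈ ⨆ (j) (_ : j ≠ i), f.eigenspace (μ j) := iSup₂_mono (fun j _ => hle j) hz
  rw [Submodule.disjoint_def.mp (f.eigenspaces_iSupIndep.comp hμ i) z hzi hz', add_zero]
  exact hy

lemma map_aeval_le_of_coeff_zero {ψ : Module.End 𝕂 V} {S T : Submodule 𝕂 V} (hTS : T ≤ S)
    (hψ : S.map ψ ≤ T) {p : 𝕂[X]} (hp : p.coeff 0 = 0) : S.map (aeval ψ p) ≤ T := by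
  obtain ⟨r, rfl⟩ := X_dvd_iff.mpr hp
  rintro _ ⟨v, hv, rfl⟩
  rw [map_mul, aeval_X, Module.End.mul_apply]
  exact hψ ⟨_, aeval_apply_smul_mem_of_le_comap hv r ψ fun w hw => hTS (hψ ⟨w, hw, rfl⟩), rfl⟩

lemma map_sum_range_succ_le {U : ℕ → Submodule 𝕂 V} {ψ : Module.End 𝕂 V} {d : ℕ}
    (hψ0 : ∀ v ∈ U 0, ψ v = 0) (hψU : ∀ i, 1 ≤ i → i ≤ d → ∀ v ∈ U i, ψ v ∈ U (i - 1)) :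
    ∀ i ≤ d, (∑ j ∈ Finset.range (i + 1), U j).map ψ ≤ ∑ j ∈ Finset.range i, U j := by
  intro i hi
  induction i with
  | zero =>
    rw [Finset.sum_range_one, Submodule.map_le_iff_le_comap]
    intro v hv
    simp [hψ0 v hv]
  | succ i ih =>
    rw [Finset.sum_range_succ U (i + 1), Submodule.add_eq_sup, Submodule.map_sup]
    refine sup_le ((ih (by omega)).trans ?_) ?_
    · rw [Finset.sum_range_succ U i, Submodule.add_eq_sup]
      exact le_sup_left
    · rintro _ ⟨v, hv, rfl⟩
      rw [Finset.sum_range_succ U i, Submodule.add_eq_sup]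
      exact Submodule.mem_sup_right (hψU (i + 1) (by omega) hi v hv)

lemma map_aeval_le_sum_range {U : ℕ → Submodule 𝕂 V} {ψ : Module.End 𝕂 V} {d : ℕ}
    (hψ0 : ∀ v ∈ U 0, ψ v = 0) (hψU : ∀ i, 1 ≤ i → i ≤ d → ∀ v ∈ U i, ψ v ∈ U (i - 1))
    {i : ℕ} (hi : i ≤ d) {p : 𝕂[X]} (hp : p.coeff 0 = 0) :
    (U i).map (aeval ψ p) ≤ ∑ j ∈ Finset.range i, U j := by
  have hsucc : ∑ j ∈ Finset.range (i + 1), U j = (∑ j ∈ Finset.range i, U j) ⊔ U i := by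
    rw [Finset.sum_range_succ, Submodule.add_eq_sup]
  refine (Submodule.map_mono (hsucc ▸ le_sup_right)).trans
    (map_aeval_le_of_coeff_zero (hsucc ▸ le_sup_left) (map_sum_range_succ_le hψ0 hψU i hi) hp)

end Submodules

lemma zpow_sub_two_mul_injective {𝕂 : Type*} [Field 𝕂] {q : 𝕂} (hq : q ≠ 0) {d : ℕ}
    (hqd : ∀ n, 1 ≤ n → n ≤ d → q ^ (2 * n) ≠ 1) :
    Function.Injective fun j : Fin (d + 1) => q ^ ((d : ℤ) - 2 * (j : ℤ)) := by
  intro i j h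
  dsimp only at h
  by_contra hne
  wlog hij : (i : ℕ) < j generalizing i j
  · exact this h.symm (Ne.symm hne) (by omega)
  apply hqd (j - i) (by omega) (by omega)
  rw [← zpow_natCast, show ((2 * (j - i) : ℕ) : ℤ) = ((d : ℤ) - 2 * i) - ((d : ℤ) - 2 * j) by
    push_cast [hij.le]; ring, zpow_sub₀ hq, h, div_self (zpow_ne_zero _ hq)]

theorem stmt_7_general
    {𝕂 : Type*} [Field 𝕂] {V : Type*} [AddCommGroup V] [Module 𝕂 V]
    (d : ℕ) (hd : 1 ≤ d) (q a : 𝕂) (hq : q ≠ 0)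
    (hq2 : ∀ i : ℕ, 1 ≤ i → i ≤ d → q ^ (2 * i) ≠ 1)
    (K : Module.End 𝕂 V)
    (U : ℕ → Submodule 𝕂 V)
    (hKU : ∀ i, i ≤ d → ∀ v ∈ U i, K v = (q ^ ((d : ℤ) - 2 * (i : ℤ))) • v)
    (ψ : Module.End 𝕂 V)
    (hψ0 : ∀ v ∈ U 0, ψ v = 0)
    (hψU : ∀ i, 1 ≤ i → i ≤ d → ∀ v ∈ U i, ψ v ∈ U (i - 1))
    (hψnil : ψ ^ (d + 1) = 0)
    (hKψ : K * ψ = q ^ 2 • (ψ * K))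
    (hinv : ∀ x : 𝕂, IsUnit (1 - x • ψ))
    (B : Module.End 𝕂 V)
    (hB : B = (1 - (a * q) • ψ) * Ring.inverse (1 - (a⁻¹ * q) • ψ) * K)
    (Ud : ℕ → Submodule 𝕂 V)
    (hUdint : DirectSum.IsInternal (fun i : Fin (d + 1) => Ud i.1))
    (hBUd : ∀ i, i ≤ d → ∀ v ∈ Ud i, B v = (q ^ ((d : ℤ) - 2 * (i : ℤ))) • v):
    qExp q (d + 1) ((a / (q - q⁻¹)) • ψ) * qExpInv q (d + 1) (-((a⁻¹ / (q - q⁻¹)) • ψ)) *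
      (qExp q (d + 1) ((a⁻¹ / (q - q⁻¹)) • ψ) * qExpInv q (d + 1) (-((a / (q - q⁻¹)) • ψ))) = 1 ∧
    qExp q (d + 1) ((a⁻¹ / (q - q⁻¹)) • ψ) * qExpInv q (d + 1) (-((a / (q - q⁻¹)) • ψ)) *
      (qExp q (d + 1) ((a / (q - q⁻¹)) • ψ) * qExpInv q (d + 1) (-((a⁻¹ / (q - q⁻¹)) • ψ))) = 1 ∧
    ∀ i, i ≤ d →
      Submodule.map
        (qExp q (d + 1) ((a / (q - q⁻¹)) • ψ) * qExpInv q (d + 1) (-((a⁻¹ / (q - q⁻¹)) • ψ)))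
        (U i) ≤ Ud i ∧
      Submodule.map
        (qExp q (d + 1) ((a / (q - q⁻¹)) • ψ) * qExpInv q (d + 1) (-((a⁻¹ / (q - q⁻¹)) • ψ)) - 1)
        (U i) ≤ ∑ j ∈ Finset.range i, U j := by
  have hqN : ∀ n, 1 ≤ n → n < d + 1 → q ^ (2 * n) ≠ 1 := fun n h₁ h₂ => hq2 n h₁ (by omega)
  have hscale (c : 𝕂) : c / (q - q⁻¹) * (q ^ 2 - 1) = c * q := by
    have hq1 : q ^ 2 ≠ 1 := by simpa using hq2 1 le_rfl hd
    have hsub : q - q⁻¹ ≠ 0 := fun h => hq1 (by field_simp at h; linear_combination h)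
    field_simp
  set s := a / (q - q⁻¹)
  set t := a⁻¹ / (q - q⁻¹)
  simp only [← aeval_qExpMulPoly]
  refine ⟨aeval_qExpMulPoly_mul_swap hq hqN hψnil s t,
    aeval_qExpMulPoly_mul_swap hq hqN hψnil t s, fun i hi => ⟨?_, ?_⟩⟩
  · have hBΔ : B * aeval ψ (qExpMulPoly q (d + 1) s t)
        = aeval ψ (qExpMulPoly q (d + 1) s t) * K := by
      rw [hB, ← hscale a, ← hscale a⁻¹]
      exact mul_inverse_mul_aeval_qExpMulPoly hq hqN hψnil hKψ s t (hinv _)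
    rintro _ ⟨v, hv, rfl⟩
    refine hUdint.mem_of_apply_eq_smul (zpow_sub_two_mul_injective hq hq2)
      (fun j => hBUd j (by omega)) (i := ⟨i, by omega⟩) ?_
    rw [← Module.End.mul_apply, hBΔ, Module.End.mul_apply, hKU i hi v hv, map_smul]
  · rw [← map_one (aeval (R := 𝕂) ψ), ← map_sub]
    refine map_aeval_le_sum_range hψ0 hψU hi ?_
    rw [coeff_sub, coeff_zero_qExpMulPoly q (Nat.succ_pos d), coeff_one_zero, sub_self]

theorem stmt_7
    {𝕂 : Type*} [Field 𝕂] {V : Type*} [AddCommGroup V] [Module 𝕂 V]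
    [FiniteDimensional 𝕂 V]
    (d : ℕ) (hd : 1 ≤ d) (q a : 𝕂) (hq : q ≠ 0) (ha : a ≠ 0)
    (hq2 : ∀ i : ℕ, 1 ≤ i → i ≤ d → q ^ (2 * i) ≠ 1)
    (ha2 : ∀ i : ℤ, 1 - (d : ℤ) ≤ i → i ≤ (d : ℤ) - 1 → a ^ 2 ≠ q ^ (2 * i))
    (K : Module.End 𝕂 V) (hK : IsUnit K)
    (U : ℕ → Submodule 𝕂 V)
    (hUne : ∀ i, i ≤ d → U i ≠ ⊥)
    (hUint : DirectSum.IsInternal (fun i : Fin (d + 1) => U i.1))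
    (hKU : ∀ i, i ≤ d → ∀ v ∈ U i, K v = (q ^ ((d : ℤ) - 2 * (i : ℤ))) • v)
    (ψ : Module.End 𝕂 V)
    (hψ0 : ∀ v ∈ U 0, ψ v = 0)
    (hψU : ∀ i, 1 ≤ i → i ≤ d → ∀ v ∈ U i, ψ v ∈ U (i - 1))
    (hψnil : ψ ^ (d + 1) = 0)
    (hKψ : K * ψ = q ^ 2 • (ψ * K))
    (hinv : ∀ x : 𝕂, IsUnit (1 - x • ψ))
    (B : Module.End 𝕂 V)
    (hB : B = (1 - (a * q) • ψ) * Ring.inverse (1 - (a⁻¹ * q) • ψ) * K)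
    (M : Module.End 𝕂 V)
    (hM : M = (a - a⁻¹)⁻¹ • (a • K - a⁻¹ • B))
    (hMunit : IsUnit M)
    (Ud : ℕ → Submodule 𝕂 V)
    (hUdne : ∀ i, i ≤ d → Ud i ≠ ⊥)
    (hUdint : DirectSum.IsInternal (fun i : Fin (d + 1) => Ud i.1))
    (hBUd : ∀ i, i ≤ d → ∀ v ∈ Ud i, B v = (q ^ ((d : ℤ) - 2 * (i : ℤ))) • v)
    (hψ0d : ∀ v ∈ Ud 0, ψ v = 0)
    (hψUd : ∀ i, 1 ≤ i → i ≤ d → ∀ v ∈ Ud i, ψ v ∈ Ud (i - 1)):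
    qExp q (d + 1) ((a / (q - q⁻¹)) • ψ) * qExpInv q (d + 1) (-((a⁻¹ / (q - q⁻¹)) • ψ)) *
      (qExp q (d + 1) ((a⁻¹ / (q - q⁻¹)) • ψ) * qExpInv q (d + 1) (-((a / (q - q⁻¹)) • ψ))) = 1 ∧
    qExp q (d + 1) ((a⁻¹ / (q - q⁻¹)) • ψ) * qExpInv q (d + 1) (-((a / (q - q⁻¹)) • ψ)) *
      (qExp q (d + 1) ((a / (q - q⁻¹)) • ψ) * qExpInv q (d + 1) (-((a⁻¹ / (q - q⁻¹)) • ψ))) = 1 ∧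
    ∀ i, i ≤ d →
      Submodule.map
        (qExp q (d + 1) ((a / (q - q⁻¹)) • ψ) * qExpInv q (d + 1) (-((a⁻¹ / (q - q⁻¹)) • ψ)))
        (U i) ≤ Ud i ∧
      Submodule.map
        (qExp q (d + 1) ((a / (q - q⁻¹)) • ψ) * qExpInv q (d + 1) (-((a⁻¹ / (q - q⁻¹)) • ψ)) - 1)
        (U i) ≤ ∑ j ∈ Finset.range i, U j :=
  stmt_7_general d hd q a hq hq2 K U hKU ψ hψ0 hψU hψnil hKψ hinv B hB Ud hUdint hBUd
end
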